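/- For n ≥ 2, r ≥ 2 and every 0 ≤ i ≤ 2^{r−1}, N_r(i) = N_{r−1}(i); that is, the sequence (N_{r−1}(i))_{0 ≤ i ≤ 2^{r−1}} is an initial segment of (N_r(i))_{0 ≤ i ≤ 2^r}. -/

import Mathlib

/-!
Splitting off the first coordinate of an edge gives `f_{r+1}(∧σ) = f_r(σ)`,
`f_{r+1}(∨σ) = n^r + (n-1) f_r(σ)` and `f_{r+1}() = n^r`. Hence the nonzero values of level
`r + 1` are those of level `r`, which lie in `[1, n^r]`, together with their images under the
injective map `x ↦ n^r + (n-1) x`, which lie in `(n^r, n^{r+1}]`. So the sorted values of level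
`r + 1` begin with the `2^r + 1` sorted values of level `r`.
-/
/-- Whether the `j`-th coordinate of the edge `e` equals the distinguished vertex
(the first vertex of its side, representing `v_{j+1} = 1`). -/
def vcond {n r : ℕ} (e : Fin r → Fin n) (j : ℕ) : Bool :=
  if h : j < r then decide ((e ⟨j, h⟩ : ℕ) = 0) else false

/-- The nested condition `v_{j+1} ∈ e σ₁ (v_{j+2} ∈ e σ₂ (⋯))` determined by a
sequence `σ` over `{∧, ∨}` (where `false` encodes `∧` and `true` encodes `∨`). -/
def edgeCond {n r : ℕ} (e : Fin r → Fin n) : ℕ → List Bool → Bool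
  | j, [] => vcond e j
  | j, false :: s => vcond e j && edgeCond e (j + 1) s
  | j, true :: s => vcond e j || edgeCond e (j + 1) s

/-- `F_r(σ)`: the set of edges of `[n]^r` satisfying the nested condition given by `σ`. -/
def Fset (n r : ℕ) (σ : List Bool) : Finset (Fin r → Fin n) :=
  Finset.univ.filter (fun e => edgeCond e 0 σ = true)

/-- `f_r(σ) = |F_r(σ)|`. -/
def fval (n r : ℕ) (σ : List Bool) : ℕ := (Fset n r σ).card

/-- `Ψ_r`: the sequences over `{∧, ∨}` of length at most `r - 1`. -/
def PsiSet (r : ℕ) : Finset (List Bool) :=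
  (Finset.range r).biUnion (fun m => (Finset.univ : Finset (Fin m → Bool)).image List.ofFn)

/-- The set of values `{f_r(σ) : σ ∈ Σ_r}`, where `f_r(α) = 0` and `f_r(ω) = n ^ r`. -/
def Nvals (n r : ℕ) : Finset ℕ :=
  insert 0 (insert (n ^ r) ((PsiSet r).image (fval n r)))

/-- `N_r(i)`: the `(i+1)`-st smallest element of `{f_r(σ) : σ ∈ Σ_r}`. -/
def Nseq (n r i : ℕ) : ℕ := (Finset.sort (Nvals n r) (· ≤ ·)).getD i 0

open Finset

lemma vcond_cons_zero {n r : ℕ} (a : Fin n) (f : Fin r → Fin n) :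
    vcond (Fin.cons a f : Fin (r + 1) → Fin n) 0 = decide ((a : ℕ) = 0) := by
  simp [vcond]

lemma vcond_cons_succ {n r : ℕ} (a : Fin n) (f : Fin r → Fin n) (j : ℕ) :
    vcond (Fin.cons a f : Fin (r + 1) → Fin n) (j + 1) = vcond f j := by
  by_cases h : j < r
  · rw [vcond, vcond, dif_pos h, dif_pos (Nat.succ_lt_succ h), show (⟨j + 1, Nat.succ_lt_succ h⟩ : Fin (r + 1)) = Fin.succ ⟨j, h⟩ from rfl,
      Fin.cons_succ]
  · simp [vcond, h]

lemma edgeCond_cons_succ {n r : ℕ} (a : Fin n) (f : Fin r → Fin n) (j : ℕ) (s : List Bool) :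
    edgeCond (Fin.cons a f : Fin (r + 1) → Fin n) (j + 1) s = edgeCond f j s := by
  induction s generalizing j with
  | nil => exact vcond_cons_succ a f j
  | cons b s ih => cases b <;> simp [edgeCond, vcond_cons_succ, ih]

lemma fval_succ_eq_sum (n r : ℕ) (σ : List Bool) :
    fval n (r + 1) σ =
      ∑ a : Fin n,
        #{f : Fin r → Fin n | edgeCond (Fin.cons a f : Fin (r + 1) → Fin n) 0 σ} := by
  simp only [fval, Fset, card_filter]
  rw [← Fintype.sum_equiv (Fin.consEquiv fun _ => Fin n) _ _ fun _ => rfl, Fintype.sum_prod_type]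
  rfl

lemma fval_succ_nil (n r : ℕ) : fval (n + 1) (r + 1) [] = (n + 1) ^ r := by
  rw [fval_succ_eq_sum, Fin.sum_univ_succ]
  simp [edgeCond, vcond_cons_zero]

lemma fval_succ_false_cons (n r : ℕ) (s : List Bool) :
    fval (n + 1) (r + 1) (false :: s) = fval (n + 1) r s := by
  rw [fval_succ_eq_sum, Fin.sum_univ_succ]
  simp [edgeCond, vcond_cons_zero, edgeCond_cons_succ]
  rfl

lemma fval_succ_true_cons (n r : ℕ) (s : List Bool) :
    fval (n + 1) (r + 1) (true :: s) = (n + 1) ^ r + n * fval (n + 1) r s := by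
  rw [fval_succ_eq_sum, Fin.sum_univ_succ]
  simp [edgeCond, vcond_cons_zero, edgeCond_cons_succ, fval, Fset]

lemma mem_PsiSet {r : ℕ} {σ : List Bool} : σ ∈ PsiSet r ↔ σ.length < r := by
  simp only [PsiSet, mem_biUnion, mem_range, mem_image, mem_univ, true_and]
  constructor
  · rintro ⟨m, hm, f, rfl⟩
    simpa using hm
  · exact fun h => ⟨σ.length, h, σ.get, List.ofFn_get σ⟩

lemma PsiSet_succ (r : ℕ) :
    PsiSet (r + 1) =
      insert [] ((PsiSet r).image (false :: ·) ∪ (PsiSet r).image (true :: ·)) := by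
  ext (_ | ⟨b, σ⟩)
  · simp [mem_PsiSet]
  · cases b <;> simp [mem_PsiSet]

def posVals (n r : ℕ) : Finset ℕ :=
  insert (n ^ r) ((PsiSet r).image (fval n r))

lemma Nvals_eq_insert_posVals (n r : ℕ) : Nvals n r = insert 0 (posVals n r) := rfl

lemma posVals_zero (n : ℕ) : posVals n 0 = {1} := by
  simp [posVals, PsiSet]

lemma posVals_succ (n r : ℕ) :
    posVals (n + 1) (r + 1) =
      posVals (n + 1) r ∪ (posVals (n + 1) r).image (fun x => (n + 1) ^ r + n * x) := by
  have htop : (n + 1) ^ (r + 1) = (n + 1) ^ r + n * (n + 1) ^ r := by ring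
  simp only [posVals, PsiSet_succ, image_insert, image_union, image_image, Function.comp_def,
    fval_succ_nil, fval_succ_false_cons, fval_succ_true_cons, htop]
  ext x
  simp only [mem_insert, mem_union, mem_image, or_assoc, or_left_comm]

lemma posVals_subset_Icc (n r : ℕ) : posVals (n + 1) r ⊆ Icc 1 ((n + 1) ^ r) := by
  induction r with
  | zero => simp [posVals_zero]
  | succ r ih =>
    rw [posVals_succ, union_subset_iff, image_subset_iff]
    refine ⟨ih.trans (Icc_subset_Icc_right (Nat.pow_le_pow_right n.succ_pos r.le_succ)), ?_⟩
    intro x hx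
    have hx' := mem_Icc.mp (ih hx)
    rw [mem_Icc, pow_succ]
    constructor <;> nlinarith [Nat.one_le_pow r (n + 1) n.succ_pos]

lemma card_posVals {n : ℕ} (hn : 0 < n) (r : ℕ) : #(posVals (n + 1) r) = 2 ^ r := by
  induction r with
  | zero => simp [posVals_zero]
  | succ r ih =>
    have hinj : Function.Injective fun x => (n + 1) ^ r + n * x := fun x y h =>
      Nat.eq_of_mul_eq_mul_left hn (Nat.add_left_cancel h)
    have hdisj : Disjoint (posVals (n + 1) r)
        ((posVals (n + 1) r).image fun x => (n + 1) ^ r + n * x) := by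
      rw [disjoint_right, forall_mem_image]
      intro x hx hx'
      have := (mem_Icc.mp (posVals_subset_Icc n r hx)).1
      have := (mem_Icc.mp (posVals_subset_Icc n r hx')).2
      nlinarith
    rw [posVals_succ, card_union_of_disjoint hdisj, card_image_of_injective _ hinj, ih, pow_succ]
    ring

lemma Finset.sort_union_of_forall_lt {α : Type*} [LinearOrder α] {s t : Finset α}
    (h : ∀ a ∈ s, ∀ b ∈ t, a < b) :
    sort (s ∪ t) (· ≤ ·) = sort s (· ≤ ·) ++ sort t (· ≤ ·) := by
  have hdisj : Disjoint s t := disjoint_left.mpr fun a ha hat => (h a ha a hat).false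
  refine List.Perm.eq_of_pairwise' (pairwise_sort _ _) ?_ ?_
  · exact List.pairwise_append.mpr ⟨pairwise_sort _ _, pairwise_sort _ _,
      fun a ha b hb => (h a ((mem_sort _).mp ha) b ((mem_sort _).mp hb)).le⟩
  · rw [← Multiset.coe_eq_coe, ← Multiset.coe_add, sort_eq, sort_eq, sort_eq,
      ← disjUnion_eq_union s t hdisj, disjUnion_val]

lemma sort_Nvals_succ {n : ℕ} (hn : 0 < n) (r : ℕ) :
    sort (Nvals (n + 1) (r + 1)) (· ≤ ·) =
      sort (Nvals (n + 1) r) (· ≤ ·) ++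
        sort ((posVals (n + 1) r).image fun x => (n + 1) ^ r + n * x) (· ≤ ·) := by
  rw [← sort_union_of_forall_lt, Nvals_eq_insert_posVals, Nvals_eq_insert_posVals, posVals_succ,
    insert_union]
  intro a ha b hb
  obtain ⟨x, hx, rfl⟩ := mem_image.mp hb
  have hx1 := (mem_Icc.mp (posVals_subset_Icc n r hx)).1
  have ha' : a ≤ (n + 1) ^ r := by
    rcases mem_insert.mp ha with rfl | ha
    · exact Nat.zero_le _
    · exact (mem_Icc.mp (posVals_subset_Icc n r ha)).2
  nlinarith

lemma card_Nvals {n : ℕ} (hn : 0 < n) (r : ℕ) : #(Nvals (n + 1) r) = 2 ^ r + 1 := by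
  rw [Nvals_eq_insert_posVals, card_insert_of_notMem, card_posVals hn]
  exact fun h => by simpa using posVals_subset_Icc n r h

theorem stmt3_general (n r i : ℕ) (hn : 2 ≤ n) (hi : i ≤ 2 ^ (r - 1)) :
    Nseq n r i = Nseq n (r - 1) i := by
  obtain ⟨n, rfl⟩ : ∃ m, n = m + 1 := ⟨n - 1, by omega⟩
  obtain _ | r := r
  · rfl
  have hlen : i < (sort (Nvals (n + 1) r) (· ≤ ·)).length := by
    rw [length_sort, card_Nvals (by omega)]
    simpa [Nat.lt_succ_iff] using hi
  rw [Nseq, Nseq, Nat.add_sub_cancel, sort_Nvals_succ (by omega), List.getD_append _ _ _ _ hlen]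

theorem stmt3 (n r i : ℕ) (hn : 2 ≤ n) (hr : 2 ≤ r) (hi : i ≤ 2 ^ (r - 1)) :
    Nseq n r i = Nseq n (r - 1) i :=
  stmt3_general n r i hn hi
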